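/- arXiv:1602.08380 — 2 statements merged into one kernel-verified Lean document; each statement's English description precedes it below -/
import Mathlib

section
/- Let (X, f_{1,∞}) be a nonautonomous discrete dynamical system and let k ∈ ℕ with k ≥ 2. Then the map sending f_k^p to f_k^p ∘ f_1^{k−1} (for p a free ultrafilter on ℕ) is a well-defined continuous surjection from E(X, f_{k,∞})* onto E(X, f_{1,∞})*; in particular, E(X, f_{1,∞})* is a continuous image of E(X, f_{k,∞})*, and f_k^p ∘ f_1^{k−1} = f_1^{p+k} where p+k is the pushforward of p under m ↦ m+k. -/
open Filter Topology

/-- The `n`-th iterate `f_1^n = f_n ∘ ⋯ ∘ f_1` (maps indexed from `1`; `f 0` unused). -/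
def iterSeq {X : Type*} (f : ℕ → X → X) : ℕ → X → X
  | 0 => id
  | n + 1 => f (n + 1) ∘ iterSeq f n

/-- `compFrom f k m = f_{k+m} ∘ ⋯ ∘ f_k`, i.e. the iterate `f_k^{m+1}` of the shifted
system `f_{k,∞} = (f_{k+n−1})_{n≥1}` (reindexed so that `m ∈ ℕ` runs over `0, 1, 2, …`). -/
def compFrom {X : Type*} (f : ℕ → X → X) (k : ℕ) : ℕ → X → X
  | 0 => f k
  | m + 1 => f (k + m + 1) ∘ compFrom f k m

/-- The `p`-limit of a sequence `u` with respect to an ultrafilter `p` on `ℕ`. -/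
noncomputable def pLim {X : Type*} [TopologicalSpace X] (p : Ultrafilter ℕ) (u : ℕ → X) : X :=
  letI : Nonempty X := ⟨u 0⟩
  limUnder (p : Filter ℕ) u

/-- `f_1^p(x) = p-lim_n f_1^n(x)`. -/
noncomputable def pIter {X : Type*} [TopologicalSpace X] (f : ℕ → X → X)
    (p : Ultrafilter ℕ) : X → X :=
  fun x => pLim p fun n => iterSeq f n x

/-- `f_k^p(x) = p-lim_n f_k^n(x)` for the shifted system `f_{k,∞}`. -/
noncomputable def pIterFrom {X : Type*} [TopologicalSpace X] (f : ℕ → X → X) (k : ℕ)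
    (p : Ultrafilter ℕ) : X → X :=
  fun x => pLim p fun m => compFrom f k m x

lemma pLim_map {X : Type*} [TopologicalSpace X] (p : Ultrafilter ℕ) (g : ℕ → ℕ)
    (u : ℕ → X) : pLim (p.map g) u = pLim p (u ∘ g) := by
  simp only [pLim, limUnder, Ultrafilter.coe_map, Filter.map_map]

lemma compFrom_iterSeq {X : Type*} (f : ℕ → X → X) (j m : ℕ) (x : X) :
    compFrom f (j + 1) m (iterSeq f j x) = iterSeq f (j + 1 + m) x := by
  induction m with
  | zero => rfl
  | succ m ih => simp only [compFrom, iterSeq, Function.comp_apply, ih]; rfl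

lemma free_map_add (p : Ultrafilter ℕ) (hp : (p : Filter ℕ) ≤ Filter.cofinite) (k : ℕ) :
    ((p.map (· + k) : Ultrafilter ℕ) : Filter ℕ) ≤ Filter.cofinite := by
  rw [Nat.cofinite_eq_atTop] at *
  exact (Filter.map_mono hp).trans (tendsto_add_atTop_nat k)

lemma free_map_sub (p : Ultrafilter ℕ) (hp : (p : Filter ℕ) ≤ Filter.cofinite) (k : ℕ) :
    ((p.map (· - k) : Ultrafilter ℕ) : Filter ℕ) ≤ Filter.cofinite := by
  rw [Nat.cofinite_eq_atTop] at *
  exact (Filter.map_mono hp).trans (tendsto_sub_atTop_nat k)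

lemma map_sub_add (q : Ultrafilter ℕ) (hq : (q : Filter ℕ) ≤ Filter.cofinite) (k : ℕ) :
    (q.map (· - k)).map (· + k) = q := by
  apply Ultrafilter.coe_injective
  simp only [Ultrafilter.coe_map, Filter.map_map]
  have h : (fun n => n - k + k) =ᶠ[(q : Filter ℕ)] id := by
    apply hq
    have : {n : ℕ | ¬ (n - k + k = n)} ⊆ {n | n < k} := by
      intro n hn
      by_contra h
      exact hn (Nat.sub_add_cancel (le_of_not_gt h))
    exact Filter.mem_cofinite.mpr ((Set.finite_lt_nat k).subset this)
  show Filter.map (fun n => n - k + k) (q : Filter ℕ) = q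
  rw [Filter.map_congr h, Filter.map_id]

/-- For `k ≥ 2`, the map sending `f_k^p` to `f_k^p ∘ f_1^{k−1}` (for `p` a free ultrafilter)
is a well-defined continuous surjection from `E(X, f_{k,∞})*` onto `E(X, f_{1,∞})*`;
in particular `E(X, f_{1,∞})*` is a continuous image of `E(X, f_{k,∞})*`, and
`f_k^p ∘ f_1^{k−1} = f_1^{p+k}` where `p+k` is the pushforward of `p` under `m ↦ m + k`. -/
theorem stmt3 {X : Type*} [MetricSpace X] [CompactSpace X]
    (f : ℕ → X → X) (hf : ∀ n, 1 ≤ n → Continuous (f n))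
    (k : ℕ) (hk : 2 ≤ k) :
    (∀ p : Ultrafilter ℕ, (p : Filter ℕ) ≤ Filter.cofinite →
        pIterFrom f k p ∘ iterSeq f (k - 1) = pIter f (p.map (· + k))) ∧
    Continuous (fun g : X → X => g ∘ iterSeq f (k - 1)) ∧
    (fun g : X → X => g ∘ iterSeq f (k - 1)) ''
        {g : X → X | ∃ p : Ultrafilter ℕ, (p : Filter ℕ) ≤ Filter.cofinite ∧ g = pIterFrom f k p}
      = {g : X → X | ∃ p : Ultrafilter ℕ, (p : Filter ℕ) ≤ Filter.cofinite ∧ g = pIter f p} := by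

  obtain ⟨j, rfl⟩ : ∃ j, k = j + 1 := ⟨k - 1, (Nat.succ_pred_eq_of_pos (by omega)).symm⟩
  have key : ∀ p : Ultrafilter ℕ,
      pIterFrom f (j + 1) p ∘ iterSeq f (j + 1 - 1) = pIter f (p.map (· + (j + 1))) := by
    intro p
    funext x
    simp only [Function.comp_apply, pIterFrom, pIter, Nat.add_sub_cancel]
    rw [pLim_map]
    congr 1
    funext m
    simp only [Function.comp_apply, compFrom_iterSeq]
    rw [Nat.add_comm m (j + 1)]
  refine ⟨fun p _ => key p, continuous_pi fun x => continuous_apply _, ?_⟩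
  ext g
  constructor
  · rintro ⟨-, ⟨p, hp, rfl⟩, rfl⟩
    exact ⟨p.map (· + (j + 1)), free_map_add p hp _, key p⟩
  · rintro ⟨q, hq, rfl⟩
    refine ⟨pIterFrom f (j + 1) (q.map (· - (j + 1))),
      ⟨q.map (· - (j + 1)), free_map_sub q hq _, rfl⟩, ?_⟩
    exact (key _).trans (by rw [map_sub_add q hq])
end

section
/- Let (X, f_{1,∞}) be a nonautonomous discrete dynamical system such that the sequence (f_n)_{n∈ℕ} converges uniformly to a function φ : X → X. Then φ^q ∘ f_1^p = f_1^{p+q} for every free ultrafilter p on ℕ and every ultrafilter q ∈ β(ℕ). -/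
open Filter Topology

/-- `φ^q(x) = q-lim_n φ^n(x)` for a single map `φ : X → X`. -/
noncomputable def pIterMap {X : Type*} [TopologicalSpace X] (φ : X → X)
    (q : Ultrafilter ℕ) : X → X :=
  fun x => pLim q fun n => φ^[n] x

/-- The sum of two ultrafilters on `ℕ`: `A ∈ p + q` iff `{n : {m : m + n ∈ A} ∈ p} ∈ q`. -/
def uAdd (p q : Ultrafilter ℕ) : Ultrafilter ℕ :=
  q.bind fun n => p.map fun m => m + n

/-!
Since `p + q` is the `q`-limit of the shifts `p + k`, `f_1^{p+q}(x) = q-lim_k p-lim_m f_1^{m+k}(x)`,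
and by continuity of `φ^k`, `φ^k(f_1^p x) = p-lim_m φ^k(f_1^m x)`. Now
`f_1^{m+k} = (f_{m+k} ∘ ⋯ ∘ f_{m+1}) ∘ f_1^m`, and for fixed `k` the block `f_{m+k} ∘ ⋯ ∘ f_{m+1}`
converges uniformly to `φ^k` as `m → ∞`, because `φ` is uniformly continuous on the compact space
`X`. Since `p` is free, only large `m` matter, so the two `p`-limits agree for every `k`.
-/

open Uniformity

section PLim

variable {X Y : Type*} [TopologicalSpace X]

lemma tendsto_pLim [CompactSpace X] (p : Ultrafilter ℕ) (u : ℕ → X) :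
    Tendsto u (p : Filter ℕ) (𝓝 (pLim p u)) := by
  have : Nonempty X := ⟨u 0⟩
  obtain ⟨a, -, ha⟩ := isCompact_univ.ultrafilter_le_nhds (p.map u) (by simp)
  exact le_nhds_lim ⟨a, ha⟩

lemma pLim_eq [T2Space X] {p : Ultrafilter ℕ} {u : ℕ → X} {a : X}
    (h : Tendsto u (p : Filter ℕ) (𝓝 a)) : pLim p u = a := by
  have : Nonempty X := ⟨a⟩
  exact h.limUnder_eq

lemma Continuous.map_pLim [CompactSpace X] [TopologicalSpace Y] [T2Space Y] {g : X → Y}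
    (hg : Continuous g) (p : Ultrafilter ℕ) (u : ℕ → X) :
    g (pLim p u) = pLim p (g ∘ u) :=
  (pLim_eq ((hg.tendsto _).comp (tendsto_pLim p u))).symm

lemma tendsto_bind_of_tendsto {ι α : Type*} {l : Filter ι} {m : ι → Filter α} {u : α → X}
    {a : ι → X} {b : X} (hu : ∀ i, Tendsto u (m i) (𝓝 (a i))) (ha : Tendsto a l (𝓝 b)) :
    Tendsto u (l.bind m) (𝓝 b) := by
  rw [(nhds_basis_opens b).tendsto_right_iff]
  rintro U ⟨hbU, hU⟩
  rw [eventually_bind]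
  filter_upwards [ha (hU.mem_nhds hbU)] with i hi
  exact hu i (hU.mem_nhds hi)

lemma pLim_uAdd [CompactSpace X] [T2Space X] (p q : Ultrafilter ℕ) (u : ℕ → X) :
    pLim (uAdd p q) u = pLim q fun k => pLim p fun m => u (m + k) := by
  refine pLim_eq (tendsto_bind_of_tendsto (fun k => ?_) (tendsto_pLim q _))
  exact tendsto_map'_iff.2 (tendsto_pLim p _)

end PLim

lemma TendstoUniformly.comp_of_uniformContinuous {ι α β γ : Type*} [UniformSpace β]
    [UniformSpace γ] {F : ι → β → γ} {f : β → γ} {G : ι → α → β} {g : α → β} {l : Filter ι}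
    (hF : TendstoUniformly F f l) (hf : UniformContinuous f) (hG : TendstoUniformly G g l) :
    TendstoUniformly (fun n => F n ∘ G n) (f ∘ g) l := by
  intro U hU
  obtain ⟨V, hV, hVU⟩ := comp_mem_uniformity_sets hU
  filter_upwards [hf.comp_tendstoUniformly hG V hV, hF V hV] with n hfG hFG x
  exact hVU (SetRel.prodMk_mem_comp (hfG x) (hFG (G n x)))

lemma TendstoUniformly.tendsto_uniformity_apply {ι α β : Type*} [UniformSpace β]
    {F : ι → α → β} {f : α → β} {l : Filter ι} (h : TendstoUniformly F f l) (y : ι → α) :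
    Tendsto (fun n => (f (y n), F n (y n))) l (𝓤 β) :=
  fun U hU => (h U hU).mono fun n hn => hn (y n)

lemma iterSeq_add {X : Type*} (f : ℕ → X → X) (m k : ℕ) :
    iterSeq f (m + k) = iterSeq (fun n => f (m + n)) k ∘ iterSeq f m := by
  induction k with
  | zero => rfl
  | succ k ih => rw [← add_assoc, iterSeq, ih]; rfl

lemma tendstoUniformly_iterSeq_shift {X : Type*} [UniformSpace X] {f : ℕ → X → X} {φ : X → X}
    (hf : TendstoUniformly f φ atTop) (hφ : UniformContinuous φ) (k : ℕ) :
    TendstoUniformly (fun m => iterSeq (fun n => f (m + n)) k) φ^[k] atTop := by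
  induction k with
  | zero => exact fun U hU => Eventually.of_forall fun _ x => refl_mem_uniformity hU
  | succ k ih =>
    rw [Function.iterate_succ']
    have hshift : TendstoUniformly (fun m => f (m + (k + 1))) φ atTop :=
      fun U hU => (tendsto_add_atTop_nat (k + 1)).eventually (hf U hU)
    exact hshift.comp_of_uniformContinuous hφ ih

/-- If `(f_n)` converges uniformly to `φ : X → X`, then `φ^q ∘ f_1^p = f_1^{p+q}` for every
free ultrafilter `p` on `ℕ` and every ultrafilter `q ∈ β(ℕ)`. -/
theorem stmt15 {X : Type*} [MetricSpace X] [CompactSpace X]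
    (f : ℕ → X → X) (hf : ∀ n, 1 ≤ n → Continuous (f n))
    (φ : X → X) (hconv : TendstoUniformly (fun n x => f n x) φ Filter.atTop)
    (p : Ultrafilter ℕ) (hp : (p : Filter ℕ) ≤ Filter.cofinite)
    (q : Ultrafilter ℕ) :
    pIterMap φ q ∘ pIter f p = pIter f (uAdd p q) := by
  have hφ : Continuous φ := hconv.continuous (eventually_atTop.2 ⟨1, hf⟩).frequently
  have hp_atTop : (p : Filter ℕ) ≤ atTop := Nat.cofinite_eq_atTop ▸ hp
  funext x
  change pLim q (fun k => φ^[k] (pLim p fun m => iterSeq f m x)) =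
    pLim (uAdd p q) fun n => iterSeq f n x
  rw [pLim_uAdd]
  congr 1
  funext k
  rw [(hφ.iterate k).map_pLim]
  refine (pLim_eq ((tendsto_pLim p _).congr_uniformity ?_)).symm
  have hblock := tendstoUniformly_iterSeq_shift hconv
    (CompactSpace.uniformContinuous_of_continuous hφ) k
  simpa only [iterSeq_add, Function.comp_apply] using
    (hblock.tendsto_uniformity_apply fun m => iterSeq f m x).mono_left hp_atTop
end
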